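/- arXiv:2604.07109 — 2 statements merged into one kernel-verified Lean document; each statement's English description precedes it below -/
import Mathlib

section
/- Upper bound construction when R has a minimum: with host hypergraph G = ⊗_{S}(n) (union over s ∈ S of tensor products of cliques K^{s_i} on parts of sizes n_i) and minimum vector r̃ ∈ R, the hypergraph F obtained from G by deleting, for every m in the downward closure of S, all edges ⋃_i (T_i ∪ [s_{m,i} − m_i]) × {i} with T_i ∈ C([n_i]∖[r̃_i − m_i + 1], m_i), is weakly saturated in G with respect to the family of colored patterns {⊗_S(r) : r ∈ R}; consequently c-wsat(⊗_S(n), ⊗_S(R)) ≤ Σ_{s∈S} ∏_i C(n_i, s_i) − Σ_{m ∈ ↓S} ∏_{i: m_i≠0} C(m_i − 1 + n_i − r̃_i, m_i). -/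
open Finset

/-- The edge ⋃_i A_i × {i} of a layered hypergraph on vertex set `Fin d × ℕ`. -/
def edgeOf {d : ℕ} (A : Fin d → Finset ℕ) : Finset (Fin d × ℕ) :=
  Finset.univ.biUnion fun i => (A i).image fun x => (i, x)

/-- The edge set of the colored hypergraph ⊗_S(n) = ⋃_{s ∈ S} ⊗_{i} K^{s_i}_{[n_i]×{i}}:
edges are unions over i of an s_i-element subset of [n_i] × {i}, for some s ∈ S.
The color of a vertex is its part index (first coordinate). -/
def tensorEdges (d : ℕ) (S : Finset (Fin d → ℕ)) (n : Fin d → ℕ) :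
    Set (Finset (Fin d × ℕ)) :=
  {W | ∃ s ∈ S, ∃ A : Fin d → Finset ℕ,
    (∀ i, A i ⊆ Icc 1 (n i) ∧ (A i).card = s i) ∧ W = edgeOf A}

/-- The edge set of the colored copy of ⊗_S(r) with parts `R_ i ⊆ [n_i]` (of sizes r_i):
all sets meeting the i-th part in s_i vertices, for some s ∈ S. -/
def copyEdges (d : ℕ) (S : Finset (Fin d → ℕ)) (R_ : Fin d → Finset ℕ) :
    Set (Finset (Fin d × ℕ)) :=
  {W | ∃ s ∈ S, ∃ A : Fin d → Finset ℕ,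
    (∀ i, A i ⊆ R_ i ∧ (A i).card = s i) ∧ W = edgeOf A}

/-- `F` is weakly saturated in the colored hypergraph ⊗_S(n) with respect to the family
of colored patterns {⊗_S(r) : r ∈ R}: the missing edges can be ordered so that each
added edge belongs to a colored copy of some ⊗_S(r) (r ∈ R) all of whose edges are
present after the addition.  A colored copy is determined by its parts
`R_ i ⊆ [n_i]` of sizes `r i` (colors, i.e. part indices, must match). -/
def CWeaklySat (d : ℕ) (S R : Finset (Fin d → ℕ)) (n : Fin d → ℕ)
    (F : Set (Finset (Fin d × ℕ))) : Prop :=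
  F ⊆ tensorEdges d S n ∧ ∃ l : List (Finset (Fin d × ℕ)), l.Nodup ∧
    {e | e ∈ l} = tensorEdges d S n \ F ∧
    ∀ j : Fin l.length, ∃ r ∈ R, ∃ R_ : Fin d → Finset ℕ,
      (∀ i, R_ i ⊆ Icc 1 (n i) ∧ (R_ i).card = r i) ∧
      l.get j ∈ copyEdges d S R_ ∧
      copyEdges d S R_ ⊆ F ∪ {e | e ∈ l.take (j.1 + 1)}

/-- The colored weak saturation number c-wsat(⊗_S(n), ⊗_S(R)). -/
noncomputable def cwsat (d : ℕ) (S R : Finset (Fin d → ℕ)) (n : Fin d → ℕ) : ℕ :=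
  sInf {k : ℕ | ∃ F : Set (Finset (Fin d × ℕ)), CWeaklySat d S R n F ∧ F.ncard = k}

/-- The downward closure ↓S = {m : ∃ s ∈ S, ∀ i, m_i ≤ s_i}, as a finset. -/
def downclFinset (d : ℕ) (S : Finset (Fin d → ℕ)) : Finset (Fin d → ℕ) :=
  (Fintype.piFinset fun i => Finset.range (S.sup (fun s => s i) + 1)).filter
    fun m => ∃ s ∈ S, ∀ i, m i ≤ s i


lemma mem_edgeOf {d : ℕ} (A : Fin d → Finset ℕ) (i : Fin d) (x : ℕ) :
    (i, x) ∈ edgeOf A ↔ x ∈ A i := by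
  simp [edgeOf, Prod.ext_iff]

lemma edgeOf_inj {d : ℕ} {A B : Fin d → Finset ℕ} (h : edgeOf A = edgeOf B) : A = B := by
  funext i; ext x
  rw [← mem_edgeOf, ← mem_edgeOf, h]

/-- card of `T ∪ Icc 1 a` when all elements of `T` exceed `rt - m + 1 ≥ a`. -/
lemma card_union_Icc {nn rt m a : ℕ} {T : Finset ℕ}
    (hT : T ⊆ Icc 1 nn \ Icc 1 (rt - m + 1)) (hTc : T.card = m) (ha : a ≤ rt - m + 1) :
    (T ∪ Icc 1 a).card = m + a := by
  rw [card_union_of_disjoint, hTc, Nat.card_Icc]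
  · omega
  · rw [disjoint_left]
    intro x hx hx2
    have h1 := hT hx
    simp only [mem_sdiff, mem_Icc] at h1
    simp only [mem_Icc] at hx2
    omega

lemma coord_le {nn rt m m' a' : ℕ} {T T' : Finset ℕ}
    (hT' : T' ⊆ Icc 1 nn \ Icc 1 (rt - m' + 1)) (hT'c : T'.card = m')
    (hTc : T.card = m) (hm' : m' ≤ rt)
    (hsub : T' ∪ Icc 1 a' ⊆ Icc 1 (rt - m) ∪ T) : m' ≤ m := by
  have hsub2 : T' ⊆ Ioc (rt - m' + 1) (rt - m) ∪ T := by
    intro x hx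
    have h1 := hT' hx
    have h2 := hsub (mem_union_left _ hx)
    simp only [mem_sdiff, mem_Icc] at h1
    simp only [mem_union, mem_Icc] at h2
    simp only [mem_union, mem_Ioc]
    rcases h2 with h2 | h2
    · left; omega
    · right; exact h2
  have h5 := card_le_card hsub2
  have h6 := card_union_le (Ioc (rt - m' + 1) (rt - m)) T
  have hIoc : (Ioc (rt - m' + 1) (rt - m)).card = (rt - m) - (rt - m' + 1) := Nat.card_Ioc _ _
  rw [hT'c] at h5
  rw [hTc, hIoc] at h6
  omega

lemma coord_subset {nn rt m m' a' : ℕ} {T T' : Finset ℕ}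
    (hT' : T' ⊆ Icc 1 nn \ Icc 1 (rt - m' + 1)) (hmm : m' ≤ m)
    (hsub : T' ∪ Icc 1 a' ⊆ Icc 1 (rt - m) ∪ T) : T' ⊆ T := by
  intro x hx
  have h1 := hT' hx
  have h2 := hsub (mem_union_left _ hx)
  simp only [mem_sdiff, mem_Icc] at h1
  simp only [mem_union, mem_Icc] at h2
  rcases h2 with h2 | h2
  · omega
  · exact h2

def Tfin (d : ℕ) (n rt m : Fin d → ℕ) : Finset (Fin d → Finset ℕ) :=
  Fintype.piFinset fun i => ((Icc 1 (n i)) \ (Icc 1 (rt i - m i + 1))).powersetCard (m i)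

lemma mem_Tfin {d : ℕ} {n rt m : Fin d → ℕ} {T : Fin d → Finset ℕ} :
    T ∈ Tfin d n rt m ↔
      ∀ i, T i ⊆ Icc 1 (n i) \ Icc 1 (rt i - m i + 1) ∧ (T i).card = m i := by
  simp [Tfin, Fintype.mem_piFinset, mem_powersetCard]

def delEdge (d : ℕ) (sm : (Fin d → ℕ) → (Fin d → ℕ)) (m : Fin d → ℕ)
    (T : Fin d → Finset ℕ) : Finset (Fin d × ℕ) :=
  edgeOf fun i => T i ∪ Icc 1 (sm m i - m i)

/-- Core structure lemma: if the fibers of a deleted edge with parameters `(m', T')` are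
contained in the parts `Icc 1 (rt i - m i) ∪ T i`, then `m' ≤ m` and `T' ⊆ T`. -/
lemma copy_param {d : ℕ} {n rt : Fin d → ℕ} {sm : (Fin d → ℕ) → (Fin d → ℕ)}
    {m m' : Fin d → ℕ} {T T' : Fin d → Finset ℕ}
    (hT : T ∈ Tfin d n rt m) (hT' : T' ∈ Tfin d n rt m')
    (hm' : ∀ i, m' i ≤ rt i)
    (hsub : ∀ i, T' i ∪ Icc 1 (sm m' i - m' i) ⊆ Icc 1 (rt i - m i) ∪ T i) :
    ∀ i, m' i ≤ m i ∧ T' i ⊆ T i := by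
  intro i
  have h1 := (mem_Tfin.1 hT) i
  have h2 := (mem_Tfin.1 hT') i
  have hle : m' i ≤ m i :=
    coord_le h2.1 h2.2 h1.2 (hm' i) (hsub i)
  exact ⟨hle, coord_subset h2.1 hle (hsub i)⟩

lemma param_eq_T {d : ℕ} {n rt m : Fin d → ℕ} {T T' : Fin d → Finset ℕ}
    (hT : T ∈ Tfin d n rt m) (hT' : T' ∈ Tfin d n rt m)
    (hsub : ∀ i, T' i ⊆ T i) : T' = T := by
  funext i
  exact eq_of_subset_of_card_le (hsub i)
    (by rw [(mem_Tfin.1 hT) i |>.2, (mem_Tfin.1 hT') i |>.2])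

/-- Uniqueness of the parameters of a deleted edge. -/
lemma delEdge_inj {d : ℕ} {n rt : Fin d → ℕ} {sm : (Fin d → ℕ) → (Fin d → ℕ)}
    {m m' : Fin d → ℕ} {T T' : Fin d → Finset ℕ}
    (hT : T ∈ Tfin d n rt m) (hT' : T' ∈ Tfin d n rt m')
    (hm : ∀ i, m i ≤ rt i) (hm' : ∀ i, m' i ≤ rt i)
    (hsmm : ∀ i, sm m i - m i ≤ rt i - m i) (hsmm' : ∀ i, sm m' i - m' i ≤ rt i - m' i)
    (h : delEdge d sm m T = delEdge d sm m' T') : m = m' ∧ T = T' := by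
  have hA := edgeOf_inj h
  have hfor : ∀ i, T i ∪ Icc 1 (sm m i - m i) = T' i ∪ Icc 1 (sm m' i - m' i) :=
    fun i => congrFun hA i
  have hsub1 : ∀ i, T' i ∪ Icc 1 (sm m' i - m' i) ⊆ Icc 1 (rt i - m i) ∪ T i := by
    intro i
    rw [← hfor i]
    intro x hx
    rcases mem_union.1 hx with hx | hx
    · exact mem_union_right _ hx
    · exact mem_union_left _ (mem_Icc.2 ⟨(mem_Icc.1 hx).1, le_trans (mem_Icc.1 hx).2 (hsmm i)⟩)
  have hsub2 : ∀ i, T i ∪ Icc 1 (sm m i - m i) ⊆ Icc 1 (rt i - m' i) ∪ T' i := by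
    intro i
    rw [hfor i]
    intro x hx
    rcases mem_union.1 hx with hx | hx
    · exact mem_union_right _ hx
    · exact mem_union_left _ (mem_Icc.2 ⟨(mem_Icc.1 hx).1, le_trans (mem_Icc.1 hx).2 (hsmm' i)⟩)
  have hc1 := copy_param hT hT' hm' hsub1
  have hc2 := copy_param hT' hT hm hsub2
  have hmeq : m = m' := funext fun i => le_antisymm (hc2 i).1 (hc1 i).1
  subst hmeq
  exact ⟨rfl, (param_eq_T hT hT' fun i => (hc1 i).2).symm⟩

lemma mem_take_of_append {α : Type*} {l₁ l₂ : List α} {e W : α} {j : Fin (l₁ ++ l₂).length}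
    (hj : (l₁ ++ l₂).get j = e) (he : e ∉ l₁) (hW : W ∈ l₁) :
    W ∈ (l₁ ++ l₂).take (j.1 + 1) := by
  have hlen : l₁.length ≤ j.1 := by
    by_contra hcon
    push_neg at hcon
    have heq : (l₁ ++ l₂).get j = l₁.get ⟨j.1, hcon⟩ := by
      simp [List.get_eq_getElem, List.getElem_append, hcon]
    rw [hj] at heq
    exact he (heq ▸ List.get_mem l₁ ⟨j.1, hcon⟩)
  rw [List.take_append]
  have : l₁.take (j.1 + 1) = l₁ := List.take_of_length_le (by omega)
  rw [this]
  exact List.mem_append_left _ hW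

lemma get_mem_take {α : Type*} {l : List α} (j : Fin l.length) :
    l.get j ∈ l.take (j.1 + 1) := by
  have h1 : j.1 < (l.take (j.1 + 1)).length := by
    rw [List.length_take]; omega
  have : (l.take (j.1 + 1)).get ⟨j.1, h1⟩ = l.get j := by
    simp [List.get_eq_getElem, List.getElem_take]
  exact this ▸ List.get_mem _ ⟨j.1, h1⟩

lemma sum_le_of_mem_downcl {d : ℕ} {S : Finset (Fin d → ℕ)} {m : Fin d → ℕ}
    (hm : m ∈ downclFinset d S) : ∑ i, m i ≤ ∑ i, S.sup fun s => s i := by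
  obtain ⟨-, s, hs, hle⟩ := Finset.mem_filter.1 hm
  exact Finset.sum_le_sum fun i _ => le_trans (hle i) (Finset.le_sup (f := fun s => s i) hs)

noncomputable def delList (d : ℕ) (S : Finset (Fin d → ℕ)) (n rt : Fin d → ℕ)
    (sm : (Fin d → ℕ) → (Fin d → ℕ)) : List (Finset (Fin d × ℕ)) :=
  (List.range ((∑ i, S.sup fun s => s i) + 1)).flatMap fun k =>
    (((downclFinset d S).filter fun m => ∑ i, m i = k).toList).flatMap fun m =>
      (Tfin d n rt m).toList.map (delEdge d sm m)

lemma mem_delList {d : ℕ} {S : Finset (Fin d → ℕ)} {n rt : Fin d → ℕ}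
    {sm : (Fin d → ℕ) → (Fin d → ℕ)} {e : Finset (Fin d × ℕ)} :
    e ∈ delList d S n rt sm ↔
      ∃ m ∈ downclFinset d S, ∃ T ∈ Tfin d n rt m, e = delEdge d sm m T := by
  simp only [delList, List.mem_flatMap, List.mem_range, Finset.mem_toList, Finset.mem_filter,
    List.mem_map]
  constructor
  · rintro ⟨k, -, m, ⟨⟨hm, -⟩, T, hT, heq⟩⟩
    exact ⟨m, hm, T, hT, heq.symm⟩
  · rintro ⟨m, hm, T, hT, heq⟩
    have hk := sum_le_of_mem_downcl hm
    exact ⟨∑ i, m i, Nat.lt_succ_of_le hk, m, ⟨⟨hm, rfl⟩, T, hT, heq.symm⟩⟩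

lemma nodup_delList {d : ℕ} {S : Finset (Fin d → ℕ)} {n rt : Fin d → ℕ}
    {sm : (Fin d → ℕ) → (Fin d → ℕ)}
    (hmrt : ∀ m ∈ downclFinset d S, ∀ i, m i ≤ rt i)
    (hsmrt : ∀ m ∈ downclFinset d S, ∀ i, sm m i ≤ rt i) :
    (delList d S n rt sm).Nodup := by
  have hinj : ∀ m ∈ downclFinset d S, ∀ m' ∈ downclFinset d S,
      ∀ T ∈ Tfin d n rt m, ∀ T' ∈ Tfin d n rt m',
      delEdge d sm m T = delEdge d sm m' T' → m = m' ∧ T = T' := by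
    intro m hm m' hm' T hT T' hT' h
    exact delEdge_inj hT hT' (hmrt m hm) (hmrt m' hm')
      (fun i => Nat.sub_le_sub_right (hsmrt m hm i) (m i))
      (fun i => Nat.sub_le_sub_right (hsmrt m' hm' i) (m' i)) h
  have hblock : ∀ k (e : Finset (Fin d × ℕ)),
      e ∈ (((downclFinset d S).filter fun m => ∑ i, m i = k).toList).flatMap
        (fun m => (Tfin d n rt m).toList.map (delEdge d sm m)) →
      ∃ m ∈ downclFinset d S, (∑ i, m i = k) ∧ ∃ T ∈ Tfin d n rt m, e = delEdge d sm m T := by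
    intro k e he
    simp only [List.mem_flatMap, Finset.mem_toList, Finset.mem_filter, List.mem_map] at he
    obtain ⟨m, ⟨hm, hk⟩, T, hT, heq⟩ := he
    exact ⟨m, hm, hk, T, hT, heq.symm⟩
  rw [delList, List.nodup_flatMap]
  constructor
  · intro k _
    rw [List.nodup_flatMap]
    constructor
    · intro m hm
      rw [Finset.mem_toList, Finset.mem_filter] at hm
      refine List.Nodup.map_on ?_ (Finset.nodup_toList _)
      intro T hT T' hT' hEq
      rw [Finset.mem_toList] at hT hT'
      exact (hinj m hm.1 m hm.1 T hT T' hT' hEq).2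
    · refine List.Pairwise.imp_of_mem ?_ ((Finset.nodup_toList _))
      intro m m' hm hm' hne
      rw [Finset.mem_toList, Finset.mem_filter] at hm hm'
      intro e he he'
      simp only [List.mem_map, Finset.mem_toList] at he he'
      obtain ⟨T, hT, heq⟩ := he
      obtain ⟨T', hT', heq'⟩ := he'
      exact hne (hinj m hm.1 m' hm'.1 T hT T' hT' (heq.trans heq'.symm)).1
  · refine List.Pairwise.imp_of_mem ?_ List.pairwise_lt_range
    intro k k' _ _ hlt e he he'
    obtain ⟨m, hm, hk, T, hT, heq⟩ := hblock k e he
    obtain ⟨m', hm', hk', T', hT', heq'⟩ := hblock k' e he'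
    have hmm := (hinj m hm m' hm' T hT T' hT' (heq.symm.trans heq')).1
    rw [hmm] at hk
    omega

noncomputable def Gfin (d : ℕ) (S : Finset (Fin d → ℕ)) (n : Fin d → ℕ) :
    Finset (Finset (Fin d × ℕ)) :=
  S.biUnion fun s => (Fintype.piFinset fun i => (Icc 1 (n i)).powersetCard (s i)).image edgeOf

lemma edgeOf_injective {d : ℕ} : Function.Injective (edgeOf (d := d)) :=
  fun _ _ h => edgeOf_inj h

lemma coe_Gfin (d : ℕ) (S : Finset (Fin d → ℕ)) (n : Fin d → ℕ) :
    ↑(Gfin d S n) = tensorEdges d S n := by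
  ext W
  simp only [Gfin, Finset.coe_biUnion, Set.mem_iUnion, Finset.mem_coe, Finset.mem_image,
    Fintype.mem_piFinset, Finset.mem_powersetCard, tensorEdges, Set.mem_setOf_eq]
  constructor
  · rintro ⟨s, hs, A, hA, rfl⟩
    exact ⟨s, hs, A, fun i => hA i, rfl⟩
  · rintro ⟨s, hs, A, hA, rfl⟩
    exact ⟨s, hs, A, fun i => hA i, rfl⟩

lemma card_Gfin (d : ℕ) (S : Finset (Fin d → ℕ)) (n : Fin d → ℕ) :
    (Gfin d S n).card = ∑ s ∈ S, ∏ i, (n i).choose (s i) := by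
  rw [Gfin, Finset.card_biUnion]
  · refine Finset.sum_congr rfl fun s _ => ?_
    rw [Finset.card_image_of_injective _ edgeOf_injective, Fintype.card_piFinset]
    refine Finset.prod_congr rfl fun i _ => ?_
    rw [Finset.card_powersetCard, Nat.card_Icc]
    norm_num
  · intro s hs s' hs' hne
    rw [Function.onFun, Finset.disjoint_left]
    rintro e he he'
    simp only [Finset.mem_image, Fintype.mem_piFinset, Finset.mem_powersetCard] at he he'
    obtain ⟨A, hA, rfl⟩ := he
    obtain ⟨A', hA', heq⟩ := he'
    have := edgeOf_inj heq.symm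
    subst this
    exact hne (funext fun i => ((hA i).2.symm.trans (hA' i).2))

noncomputable def Dfin (d : ℕ) (S : Finset (Fin d → ℕ)) (n rt : Fin d → ℕ)
    (sm : (Fin d → ℕ) → (Fin d → ℕ)) : Finset (Finset (Fin d × ℕ)) :=
  (downclFinset d S).biUnion fun m => (Tfin d n rt m).image (delEdge d sm m)

lemma mem_Dfin {d : ℕ} {S : Finset (Fin d → ℕ)} {n rt : Fin d → ℕ}
    {sm : (Fin d → ℕ) → (Fin d → ℕ)} {e : Finset (Fin d × ℕ)} :
    e ∈ Dfin d S n rt sm ↔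
      ∃ m ∈ downclFinset d S, ∃ T ∈ Tfin d n rt m, e = delEdge d sm m T := by
  simp only [Dfin, Finset.mem_biUnion, Finset.mem_image]
  constructor
  · rintro ⟨m, hm, T, hT, heq⟩; exact ⟨m, hm, T, hT, heq.symm⟩
  · rintro ⟨m, hm, T, hT, heq⟩; exact ⟨m, hm, T, hT, heq.symm⟩

lemma card_Dfin {d : ℕ} {S : Finset (Fin d → ℕ)} {n rt : Fin d → ℕ}
    {sm : (Fin d → ℕ) → (Fin d → ℕ)}
    (hmrt : ∀ m ∈ downclFinset d S, ∀ i, m i ≤ rt i)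
    (hsmrt : ∀ m ∈ downclFinset d S, ∀ i, sm m i ≤ rt i) :
    (Dfin d S n rt sm).card = ∑ m ∈ downclFinset d S,
      ∏ i, ((Icc 1 (n i)) \ (Icc 1 (rt i - m i + 1))).card.choose (m i) := by
  have hinj : ∀ m ∈ downclFinset d S, ∀ m' ∈ downclFinset d S,
      ∀ T ∈ Tfin d n rt m, ∀ T' ∈ Tfin d n rt m',
      delEdge d sm m T = delEdge d sm m' T' → m = m' ∧ T = T' := by
    intro m hm m' hm' T hT T' hT' h
    exact delEdge_inj hT hT' (hmrt m hm) (hmrt m' hm')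
      (fun i => Nat.sub_le_sub_right (hsmrt m hm i) (m i))
      (fun i => Nat.sub_le_sub_right (hsmrt m' hm' i) (m' i)) h
  rw [Dfin, Finset.card_biUnion]
  · refine Finset.sum_congr rfl fun m hm => ?_
    rw [Finset.card_image_of_injOn, Tfin, Fintype.card_piFinset]
    · exact Finset.prod_congr rfl fun i _ => by rw [Finset.card_powersetCard]
    · intro T hT T' hT' h
      exact (hinj m hm m hm T (by simpa using hT) T' (by simpa using hT') h).2
  · intro m hm m' hm' hne
    rw [Function.onFun, Finset.disjoint_left]
    rintro e he he'
    simp only [Finset.mem_image] at he he'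
    obtain ⟨T, hT, rfl⟩ := he
    obtain ⟨T', hT', heq⟩ := he'
    exact hne (hinj m hm m' hm' T hT T' hT' heq.symm).1

lemma delEdge_mem_Gfin {d : ℕ} {S : Finset (Fin d → ℕ)} {n rt m : Fin d → ℕ}
    {sm : (Fin d → ℕ) → (Fin d → ℕ)} {T : Fin d → Finset ℕ}
    (hsmS : sm m ∈ S) (hT : T ∈ Tfin d n rt m) (hmsm : ∀ i, m i ≤ sm m i)
    (hsmrt : ∀ i, sm m i ≤ rt i) (hrtn : ∀ i, rt i ≤ n i) :
    delEdge d sm m T ∈ Gfin d S n := by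
  rw [Gfin, Finset.mem_biUnion]
  refine ⟨sm m, hsmS, Finset.mem_image.2 ⟨fun i => T i ∪ Icc 1 (sm m i - m i), ?_, rfl⟩⟩
  rw [Fintype.mem_piFinset]
  intro i
  have hTi := mem_Tfin.1 hT i
  rw [Finset.mem_powersetCard]
  constructor
  · exact Finset.union_subset (hTi.1.trans (Finset.sdiff_subset))
      (Finset.Icc_subset_Icc_right (by have := hsmrt i; have := hrtn i; omega))
  · rw [card_union_Icc hTi.1 hTi.2 (by have := hsmrt i; omega)]
    have := hmsm i; omega

lemma Dfin_subset_Gfin {d : ℕ} {S : Finset (Fin d → ℕ)} {n rt : Fin d → ℕ}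
    {sm : (Fin d → ℕ) → (Fin d → ℕ)}
    (hsmS : ∀ m ∈ downclFinset d S, sm m ∈ S)
    (hmsm : ∀ m ∈ downclFinset d S, ∀ i, m i ≤ sm m i)
    (hsmrt : ∀ m ∈ downclFinset d S, ∀ i, sm m i ≤ rt i)
    (hrtn : ∀ i, rt i ≤ n i) :
    Dfin d S n rt sm ⊆ Gfin d S n := by
  intro e he
  obtain ⟨m, hm, T, hT, rfl⟩ := mem_Dfin.1 he
  exact delEdge_mem_Gfin (hsmS m hm) hT (hmsm m hm) (hsmrt m hm) hrtn

lemma coe_Dfin (d : ℕ) (S : Finset (Fin d → ℕ)) (n rt : Fin d → ℕ)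
    (sm : (Fin d → ℕ) → (Fin d → ℕ)) :
    ↑(Dfin d S n rt sm) =
      {W : Finset (Fin d × ℕ) | ∃ m ∈ downclFinset d S, ∃ T : Fin d → Finset ℕ,
        (∀ i, T i ⊆ Icc 1 (n i) \ Icc 1 (rt i - m i + 1) ∧ (T i).card = m i) ∧
        W = edgeOf fun i => T i ∪ Icc 1 (sm m i - m i)} := by
  ext W
  simp only [Finset.mem_coe, mem_Dfin, Set.mem_setOf_eq, mem_Tfin, delEdge]

lemma prod_card_choose {d : ℕ} {n rt m : Fin d → ℕ}
    (h1 : ∀ i, m i ≤ rt i) (h2 : ∀ i, rt i ≤ n i) :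
    ∏ i, ((Icc 1 (n i)) \ (Icc 1 (rt i - m i + 1))).card.choose (m i)
      = ∏ i ∈ Finset.univ.filter (fun i => m i ≠ 0),
          (m i - 1 + n i - rt i).choose (m i) := by
  rw [← Finset.prod_filter_mul_prod_filter_not Finset.univ (fun i => m i ≠ 0)]
  have hright : (∏ i ∈ Finset.univ.filter (fun i => ¬ m i ≠ 0),
      ((Icc 1 (n i)) \ (Icc 1 (rt i - m i + 1))).card.choose (m i)) = 1 := by
    refine Finset.prod_eq_one fun i hi => ?_
    have : m i = 0 := by simpa using (Finset.mem_filter.1 hi).2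
    rw [this, Nat.choose_zero_right]
  rw [hright, mul_one]
  refine Finset.prod_congr rfl fun i hi => ?_
  have hm0 : m i ≠ 0 := by simpa using (Finset.mem_filter.1 hi).2
  have hcard : (Icc 1 (n i) \ Icc 1 (rt i - m i + 1)).card = m i - 1 + n i - rt i := by
    rw [Finset.card_sdiff_of_subset (Finset.Icc_subset_Icc_right (by have := h1 i; have := h2 i; omega)),
      Nat.card_Icc, Nat.card_Icc]
    have := h1 i; have := h2 i; omega
  rw [hcard]

lemma mem_rangeFlatMap {d : ℕ} {S : Finset (Fin d → ℕ)} {n rt : Fin d → ℕ}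
    {sm : (Fin d → ℕ) → (Fin d → ℕ)} {e : Finset (Fin d × ℕ)} {N : ℕ} :
    e ∈ (List.range N).flatMap
        (fun k => (((downclFinset d S).filter fun m => ∑ i, m i = k).toList).flatMap
          fun m => (Tfin d n rt m).toList.map (delEdge d sm m)) ↔
      ∃ m ∈ downclFinset d S, (∑ i, m i < N) ∧ ∃ T ∈ Tfin d n rt m, e = delEdge d sm m T := by
  simp only [List.mem_flatMap, List.mem_range, Finset.mem_toList, Finset.mem_filter,
    List.mem_map]
  constructor
  · rintro ⟨k, hk, m, ⟨⟨hm, hks⟩, T, hT, heq⟩⟩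
    exact ⟨m, hm, by omega, T, hT, heq.symm⟩
  · rintro ⟨m, hm, hk, T, hT, heq⟩
    exact ⟨∑ i, m i, hk, m, ⟨⟨hm, rfl⟩, T, hT, heq.symm⟩⟩

lemma mem_take_of_append' {α : Type*} {l l₁ l₂ : List α} {e W : α} (hl : l = l₁ ++ l₂)
    {j : Fin l.length} (hj : l.get j = e) (he : e ∉ l₁) (hW : W ∈ l₁) :
    W ∈ l.take (j.1 + 1) := by
  subst hl
  exact mem_take_of_append hj he hW

lemma delList_split {d : ℕ} {S : Finset (Fin d → ℕ)} (n rt : Fin d → ℕ)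
    (sm : (Fin d → ℕ) → (Fin d → ℕ)) {k : ℕ} (hk : k ≤ (∑ i, S.sup fun s => s i) + 1) :
    delList d S n rt sm =
      ((List.range k).flatMap
        (fun k' => (((downclFinset d S).filter fun m => ∑ i, m i = k').toList).flatMap
          fun m => (Tfin d n rt m).toList.map (delEdge d sm m))) ++
      ((List.range ((∑ i, S.sup fun s => s i) + 1 - k)).map (k + ·)).flatMap
        (fun k' => (((downclFinset d S).filter fun m => ∑ i, m i = k').toList).flatMap
          fun m => (Tfin d n rt m).toList.map (delEdge d sm m)) := by
  have h2 : (∑ i, S.sup fun s => s i) + 1 = k + ((∑ i, S.sup fun s => s i) + 1 - k) := by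
    generalize (∑ i, S.sup fun s => s i) = K at *
    omega
  simp only [delList]
  conv_lhs => rw [h2, List.range_add, List.flatMap_append ..]

/-- Upper bound construction when R has a minimum element r̃: the hypergraph F obtained
from ⊗_S(n) by deleting, for every m ∈ ↓S, all edges ⋃_i (T_i ∪ [s_{m,i} − m_i]) × {i}
with T_i ∈ C([n_i]∖[r̃_i − m_i + 1], m_i), is weakly saturated with respect to the
colored patterns {⊗_S(r) : r ∈ R}; consequently
c-wsat(⊗_S(n), ⊗_S(R)) ≤ Σ_{s∈S} ∏_i C(n_i, s_i) − Σ_{m∈↓S} ∏_{i : m_i ≠ 0} C(m_i − 1 + n_i − r̃_i, m_i). -/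
theorem cwsat_upper_bound_min_r (d : ℕ) (hd : 1 ≤ d) (S R : Finset (Fin d → ℕ))
    (hS : S.Nonempty) (hR : R.Nonempty) (n : Fin d → ℕ)
    (hcomp : ∀ s ∈ S, ∀ r ∈ R, ∀ i, s i ≤ r i ∧ r i ≤ n i)
    (rt : Fin d → ℕ) (hrt : rt ∈ R) (hrtmin : ∀ r ∈ R, ∀ i, rt i ≤ r i)
    (sm : (Fin d → ℕ) → (Fin d → ℕ))
    (hsm : ∀ m ∈ downclFinset d S, sm m ∈ S ∧ ∀ i, m i ≤ sm m i) :
    CWeaklySat d S R n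
      (tensorEdges d S n \
        {W | ∃ m ∈ downclFinset d S, ∃ T : Fin d → Finset ℕ,
          (∀ i, T i ⊆ Icc 1 (n i) \ Icc 1 (rt i - m i + 1) ∧ (T i).card = m i) ∧
          W = edgeOf fun i => T i ∪ Icc 1 (sm m i - m i)}) ∧
    cwsat d S R n ≤
      (∑ s ∈ S, ∏ i : Fin d, (n i).choose (s i)) -
        ∑ m ∈ downclFinset d S, ∏ i ∈ Finset.univ.filter (fun i => m i ≠ 0),
          (m i - 1 + n i - rt i).choose (m i) := by
  classical
  obtain ⟨s₀, hs₀⟩ := hS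
  have hrtn : ∀ i, rt i ≤ n i := fun i => (hcomp s₀ hs₀ rt hrt i).2
  have hmrt : ∀ m ∈ downclFinset d S, ∀ i, m i ≤ rt i := by
    intro m hm i
    obtain ⟨-, s, hs, hle⟩ := Finset.mem_filter.1 hm
    exact le_trans (hle i) (hcomp s hs rt hrt i).1
  have hsmS : ∀ m ∈ downclFinset d S, sm m ∈ S := fun m hm => (hsm m hm).1
  have hmsm : ∀ m ∈ downclFinset d S, ∀ i, m i ≤ sm m i := fun m hm => (hsm m hm).2
  have hsmrt : ∀ m ∈ downclFinset d S, ∀ i, sm m i ≤ rt i :=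
    fun m hm i => (hcomp (sm m) (hsmS m hm) rt hrt i).1
  have hinj : ∀ m ∈ downclFinset d S, ∀ m' ∈ downclFinset d S,
      ∀ T ∈ Tfin d n rt m, ∀ T' ∈ Tfin d n rt m',
      delEdge d sm m T = delEdge d sm m' T' → m = m' ∧ T = T' := by
    intro m hm m' hm' T hT T' hT' h
    exact delEdge_inj hT hT' (hmrt m hm) (hmrt m' hm')
      (fun i => Nat.sub_le_sub_right (hsmrt m hm i) (m i))
      (fun i => Nat.sub_le_sub_right (hsmrt m' hm' i) (m' i)) h
  have hDG : Dfin d S n rt sm ⊆ Gfin d S n := Dfin_subset_Gfin hsmS hmsm hsmrt hrtn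
  have hDset : {W : Finset (Fin d × ℕ) | ∃ m ∈ downclFinset d S, ∃ T : Fin d → Finset ℕ,
        (∀ i, T i ⊆ Icc 1 (n i) \ Icc 1 (rt i - m i + 1) ∧ (T i).card = m i) ∧
        W = edgeOf fun i => T i ∪ Icc 1 (sm m i - m i)} = ↑(Dfin d S n rt sm) :=
    (coe_Dfin d S n rt sm).symm
  have hGset : tensorEdges d S n = ↑(Gfin d S n) := (coe_Gfin d S n).symm
  have hDsubG' : (↑(Dfin d S n rt sm) : Set (Finset (Fin d × ℕ))) ⊆ tensorEdges d S n := by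
    rw [hGset]
    exact fun e he => hDG he
  have hCW : CWeaklySat d S R n
      (tensorEdges d S n \
        {W | ∃ m ∈ downclFinset d S, ∃ T : Fin d → Finset ℕ,
          (∀ i, T i ⊆ Icc 1 (n i) \ Icc 1 (rt i - m i + 1) ∧ (T i).card = m i) ∧
          W = edgeOf fun i => T i ∪ Icc 1 (sm m i - m i)}) := by
    refine ⟨Set.diff_subset, delList d S n rt sm, nodup_delList hmrt hsmrt, ?_, ?_⟩
    · rw [hDset, Set.diff_diff_cancel_left hDsubG']
      ext e
      exact mem_delList.trans mem_Dfin.symm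
    · intro j
      have hjl : (delList d S n rt sm).get j ∈ delList d S n rt sm :=
        List.get_mem _ _
      obtain ⟨m, hm, T, hT, heq⟩ := mem_delList.1 hjl
      have hRsub : ∀ i, (Icc 1 (rt i - m i) ∪ T i) ⊆ Icc 1 (n i) := by
        intro i
        exact Finset.union_subset
          (Finset.Icc_subset_Icc_right (le_trans (Nat.sub_le _ _) (hrtn i)))
          ((mem_Tfin.1 hT i).1.trans Finset.sdiff_subset)
      refine ⟨rt, hrt, fun i => Icc 1 (rt i - m i) ∪ T i, ?_, ?_, ?_⟩
      · intro i
        have hTi := mem_Tfin.1 hT i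
        refine ⟨hRsub i, ?_⟩
        show (Icc 1 (rt i - m i) ∪ T i).card = rt i
        rw [Finset.union_comm, card_union_Icc hTi.1 hTi.2 (by omega)]
        have := hmrt m hm i
        omega
      · refine ⟨sm m, hsmS m hm, fun i => T i ∪ Icc 1 (sm m i - m i),
          fun i => ⟨?_, ?_⟩, ?_⟩
        · show T i ∪ Icc 1 (sm m i - m i) ⊆ Icc 1 (rt i - m i) ∪ T i
          refine Finset.union_subset Finset.subset_union_right ?_
          exact Finset.Subset.trans
            (Finset.Icc_subset_Icc_right (Nat.sub_le_sub_right (hsmrt m hm i) (m i)))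
            Finset.subset_union_left
        · show (T i ∪ Icc 1 (sm m i - m i)).card = sm m i
          have hTi := mem_Tfin.1 hT i
          rw [card_union_Icc hTi.1 hTi.2 (by have := hsmrt m hm i; omega)]
          have := hmsm m hm i
          omega
        · rw [heq]; rfl
      · intro W hW
        obtain ⟨s'', hs'', A, hA, rfl⟩ := hW
        by_cases hWD : (edgeOf A) ∈ Dfin d S n rt sm
        · right
          obtain ⟨m', hm', T', hT', hWeq⟩ := mem_Dfin.1 hWD
          have hAeq : A = fun i => T' i ∪ Icc 1 (sm m' i - m' i) := edgeOf_inj hWeq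
          have hsubA : ∀ i, T' i ∪ Icc 1 (sm m' i - m' i) ⊆ Icc 1 (rt i - m i) ∪ T i := by
            intro i
            have h1 := (hA i).1
            rw [hAeq] at h1
            exact h1
          have hcp := copy_param hT hT' (hmrt m' hm') hsubA
          by_cases hmeq : m' = m
          · subst hmeq
            have hTeq : T' = T := param_eq_T hT hT' fun i => (hcp i).2
            subst hTeq
            have hgj : edgeOf A = (delList d S n rt sm).get j := by
              rw [hAeq, heq]; rfl
            show edgeOf A ∈ {e | e ∈ (delList d S n rt sm).take (j.1 + 1)}
            rw [hgj]
            exact get_mem_take j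
          · have hlt : ∑ i, m' i < ∑ i, m i := by
              refine Finset.sum_lt_sum (fun i _ => (hcp i).1) ?_
              obtain ⟨i, hi⟩ := Function.ne_iff.1 hmeq
              exact ⟨i, Finset.mem_univ i, lt_of_le_of_ne (hcp i).1 hi⟩
            have hsplit := delList_split (S := S) n rt sm
              (k := ∑ i, m i) (Nat.le_succ_of_le (sum_le_of_mem_downcl hm))
            show edgeOf A ∈ {e | e ∈ (delList d S n rt sm).take (j.1 + 1)}
            refine mem_take_of_append' hsplit rfl ?_ ?_
            · intro hcon
              obtain ⟨m'', hm'', hk'', T'', hT'', heq''⟩ := mem_rangeFlatMap.1 hcon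
              rw [heq] at heq''
              have := (hinj m hm m'' hm'' T hT T'' hT'' heq'').1
              rw [← this] at hk''
              omega
            · exact mem_rangeFlatMap.2 ⟨m', hm', hlt, T', hT', hWeq⟩
        · left
          refine ⟨⟨s'', hs'', A, fun i => ⟨(hA i).1.trans (hRsub i), (hA i).2⟩, rfl⟩, ?_⟩
          rw [hDset]
          exact hWD
  refine ⟨hCW, ?_⟩
  have hFeq : tensorEdges d S n \
      {W : Finset (Fin d × ℕ) | ∃ m ∈ downclFinset d S, ∃ T : Fin d → Finset ℕ,
        (∀ i, T i ⊆ Icc 1 (n i) \ Icc 1 (rt i - m i + 1) ∧ (T i).card = m i) ∧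
        W = edgeOf fun i => T i ∪ Icc 1 (sm m i - m i)} =
      ↑(Gfin d S n \ Dfin d S n rt sm) := by
    rw [hGset, hDset, Finset.coe_sdiff]
  have hmem : ((Gfin d S n \ Dfin d S n rt sm).card : ℕ) ∈
      {k : ℕ | ∃ F : Set (Finset (Fin d × ℕ)), CWeaklySat d S R n F ∧ F.ncard = k} := by
    refine ⟨_, hCW, ?_⟩
    rw [hFeq, Set.ncard_coe_finset]
  calc cwsat d S R n ≤ (Gfin d S n \ Dfin d S n rt sm).card := Nat.sInf_le hmem
    _ = (Gfin d S n).card - (Dfin d S n rt sm).card := Finset.card_sdiff_of_subset hDG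
    _ = _ := by
        rw [card_Gfin, card_Dfin hmrt hsmrt]
        congr 1
        exact Finset.sum_congr rfl fun m hm => prod_card_choose (hmrt m hm) hrtn
end

section
/- For d = 2, S = {(1,0),(0,1)} and R = {(2,1),(1,2)}, and any n with n_1, n_2 ≥ 2: the colored weak saturation number c-wsat(⊗_S(n), ⊗_S(R)) equals 2, whereas the inclusion–exclusion quantity q(n, S, R) equals (n_1 − 1) + (n_2 − 1) + 1; hence the general lower bound Σ_{s∈S}∏_i C(n_i, s_i) − q(n,S,R) = n_1 + n_2 − q(n,S,R) = 1 is not tight in this case. -/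
open Finset

/-- The inclusion–exclusion quantity
q(n,S,R) = Σ_{m∈↓S} Σ_{∅≠Q⊆R} (−1)^{|Q|+1} ∏_{i : m_i≠0} C(m_i−1+n_i−max_{r∈Q} r_i, m_i). -/
def qval (d : ℕ) (n : Fin d → ℕ) (S R : Finset (Fin d → ℕ)) : ℤ :=
  ∑ m ∈ downclFinset d S, ∑ Q ∈ R.powerset.filter (fun Q => Q ≠ ∅),
    (-1 : ℤ) ^ (Q.card + 1) *
      ∏ i ∈ Finset.univ.filter (fun i => m i ≠ 0),
        ((m i - 1 + n i - Q.sup (fun r => r i)).choose (m i) : ℤ)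

/- helpers -/

theorem mem_take_self' {α : Type*} (l : List α) (i : ℕ) (h : i < l.length) :
    l[i] ∈ l.take (i+1) := by
  have hl : i < (l.take (i+1)).length := by simp; omega
  have hm : (l.take (i+1))[i]'hl ∈ l.take (i+1) := List.getElem_mem hl
  rwa [← List.getElem_take' (hj := i.lt_add_one)] at hm

lemma edgeOf_two (A : Fin 2 → Finset ℕ) :
    edgeOf A = ((A 0).image fun x => ((0:Fin 2), x)) ∪ ((A 1).image fun x => ((1:Fin 2), x)) := by
  ext ⟨i, x⟩
  simp only [edgeOf, Finset.mem_biUnion, Finset.mem_univ, true_and, Finset.mem_union,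
    Finset.mem_image, Fin.exists_fin_two]

lemma mem_copy (R_ : Fin 2 → Finset ℕ) (W : Finset (Fin 2 × ℕ)) :
    W ∈ copyEdges 2 {![1,0],![0,1]} R_ ↔
      (∃ x ∈ R_ 0, W = {((0:Fin 2), x)}) ∨ (∃ y ∈ R_ 1, W = {((1:Fin 2), y)}) := by
  constructor
  · rintro ⟨s, hs, A, hA, rfl⟩
    rcases Finset.mem_insert.1 hs with rfl | hs
    · left
      obtain ⟨x, hx⟩ := Finset.card_eq_one.1 ((hA 0).2)
      have h1 : A 1 = ∅ := Finset.card_eq_zero.1 ((hA 1).2)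
      refine ⟨x, (hA 0).1 (hx ▸ Finset.mem_singleton_self x), ?_⟩
      rw [edgeOf_two, hx, h1]; simp
    · right
      rcases Finset.mem_singleton.1 hs with rfl
      obtain ⟨y, hy⟩ := Finset.card_eq_one.1 ((hA 1).2)
      have h0 : A 0 = ∅ := Finset.card_eq_zero.1 ((hA 0).2)
      refine ⟨y, (hA 1).1 (hy ▸ Finset.mem_singleton_self y), ?_⟩
      rw [edgeOf_two, hy, h0]; simp
  · rintro (⟨x, hx, rfl⟩ | ⟨y, hy, rfl⟩)
    · refine ⟨![1,0], by decide, ![{x}, ∅], ?_, ?_⟩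
      · intro i; fin_cases i <;> simp [Finset.singleton_subset_iff, hx]
      · rw [edgeOf_two]; simp
    · refine ⟨![0,1], by decide, ![∅, {y}], ?_, ?_⟩
      · intro i; fin_cases i <;> simp [Finset.singleton_subset_iff, hy]
      · rw [edgeOf_two]; simp

lemma mem_tensor (n : Fin 2 → ℕ) (W : Finset (Fin 2 × ℕ)) :
    W ∈ tensorEdges 2 {![1,0],![0,1]} n ↔
      (∃ x ∈ Icc 1 (n 0), W = {((0:Fin 2), x)}) ∨ (∃ y ∈ Icc 1 (n 1), W = {((1:Fin 2), y)}) :=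
  mem_copy (fun i => Icc 1 (n i)) W

lemma sgl_inj (i j : Fin 2) (x y : ℕ) :
    ({(i, x)} : Finset (Fin 2 × ℕ)) = {(j, y)} ↔ i = j ∧ x = y := by
  rw [Finset.singleton_inj, Prod.mk.injEq]

def F0 : Set (Finset (Fin 2 × ℕ)) := {{((0:Fin 2), 1)}, {((0:Fin 2), 2)}}

lemma upper (n : Fin 2 → ℕ) (h1 : 2 ≤ n 0) (h2 : 2 ≤ n 1) :
    CWeaklySat 2 {![1,0],![0,1]} {![2,1],![1,2]} n F0 := by
  classical
  constructor
  · intro e he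
    rw [mem_tensor]
    rcases he with rfl | rfl
    · exact Or.inl ⟨1, Finset.mem_Icc.2 ⟨le_refl 1, by omega⟩, rfl⟩
    · exact Or.inl ⟨2, Finset.mem_Icc.2 ⟨by omega, h1⟩, rfl⟩
  · set l1 : List (Finset (Fin 2 × ℕ)) :=
      ((Icc 1 (n 1)).sort (·≤·)).map (fun y => {((1:Fin 2), y)}) with hl1
    set l2 : List (Finset (Fin 2 × ℕ)) :=
      ((Icc 3 (n 0)).sort (·≤·)).map (fun x => {((0:Fin 2), x)}) with hl2
    have hmem1 : ∀ e, e ∈ l1 ↔ ∃ y, 1 ≤ y ∧ y ≤ n 1 ∧ e = {((1:Fin 2), y)} := by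
      intro e
      simp only [hl1, List.mem_map, Finset.mem_sort, Finset.mem_Icc]
      constructor
      · rintro ⟨y, ⟨hy1, hy2⟩, rfl⟩; exact ⟨y, hy1, hy2, rfl⟩
      · rintro ⟨y, hy1, hy2, rfl⟩; exact ⟨y, ⟨hy1, hy2⟩, rfl⟩
    have hmem2 : ∀ e, e ∈ l2 ↔ ∃ x, 3 ≤ x ∧ x ≤ n 0 ∧ e = {((0:Fin 2), x)} := by
      intro e
      simp only [hl2, List.mem_map, Finset.mem_sort, Finset.mem_Icc]
      constructor
      · rintro ⟨x, ⟨hx1, hx2⟩, rfl⟩; exact ⟨x, hx1, hx2, rfl⟩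
      · rintro ⟨x, hx1, hx2, rfl⟩; exact ⟨x, ⟨hx1, hx2⟩, rfl⟩
    refine ⟨l1 ++ l2, ?_, ?_, ?_⟩
    · refine List.Nodup.append ?_ ?_ ?_
      · exact (Finset.sort_nodup _ _).map (fun a b hab => by simpa [sgl_inj] using hab)
      · exact (Finset.sort_nodup _ _).map (fun a b hab => by simpa [sgl_inj] using hab)
      · intro e he1 he2
        obtain ⟨y, _, _, rfl⟩ := (hmem1 e).1 he1
        obtain ⟨x, _, _, hx⟩ := (hmem2 _).1 he2
        rw [sgl_inj] at hx
        exact absurd hx.1 (by decide)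
    · ext e
      simp only [Set.mem_setOf_eq, List.mem_append, Set.mem_diff, mem_tensor, hmem1, hmem2,
        F0, Set.mem_insert_iff, Set.mem_singleton_iff]
      constructor
      · rintro (⟨y, hy1, hy2, rfl⟩ | ⟨x, hx1, hx2, rfl⟩)
        · refine ⟨Or.inr ⟨y, Finset.mem_Icc.2 ⟨hy1, hy2⟩, rfl⟩, ?_⟩
          rintro (h | h) <;> rw [sgl_inj] at h
          · exact absurd h.1 (by decide)
          · exact absurd h.1 (by decide)
        · refine ⟨Or.inl ⟨x, Finset.mem_Icc.2 ⟨by omega, hx2⟩, rfl⟩, ?_⟩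
          rintro (h | h) <;> rw [sgl_inj] at h
          · omega
          · omega
      · rintro ⟨(⟨x, hx, rfl⟩ | ⟨y, hy, rfl⟩), hne⟩
        · rw [Finset.mem_Icc] at hx
          refine Or.inr ⟨x, ?_, hx.2, rfl⟩
          by_contra hlt
          rcases (by omega : x = 1 ∨ x = 2) with rfl | rfl
          · exact hne (Or.inl rfl)
          · exact hne (Or.inr rfl)
        · rw [Finset.mem_Icc] at hy
          exact Or.inl ⟨y, hy.1, hy.2, rfl⟩
    · intro j
      have hjl : (j : ℕ) < (l1 ++ l2).length := j.2
      have htake : (l1 ++ l2).get j ∈ {e | e ∈ (l1 ++ l2).take ((j : ℕ) + 1)} := by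
        rw [List.get_eq_getElem]
        exact mem_take_self' _ _ hjl
      rcases lt_or_ge (j : ℕ) l1.length with hj | hj
      · -- first block: a part-1 singleton
        have hget : (l1 ++ l2).get j = l1[(j : ℕ)] := by
          rw [List.get_eq_getElem, List.getElem_append_left hj]
        obtain ⟨y, hy1, hy2, hy⟩ := (hmem1 _).1 (List.getElem_mem hj)
        refine ⟨![2,1], by decide, ![{1, 2}, {y}], ?_, ?_, ?_⟩
        · intro i; fin_cases i
          · show {1, 2} ⊆ Icc 1 (n 0) ∧ ({1, 2} : Finset ℕ).card = 2
            refine ⟨?_, by decide⟩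
            intro a ha
            simp only [Finset.mem_insert, Finset.mem_singleton] at ha
            rw [Finset.mem_Icc]
            rcases ha with rfl | rfl <;> omega
          · show {y} ⊆ Icc 1 (n 1) ∧ ({y} : Finset ℕ).card = 1
            refine ⟨?_, Finset.card_singleton y⟩
            rw [Finset.singleton_subset_iff, Finset.mem_Icc]
            exact ⟨hy1, hy2⟩
        · rw [mem_copy]
          exact Or.inr ⟨y, Finset.mem_singleton_self y, by rw [hget, hy]⟩
        · intro W hW
          rw [mem_copy] at hW
          rcases hW with ⟨x, hx, rfl⟩ | ⟨c, hc, rfl⟩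
          · simp only [Matrix.cons_val_zero, Finset.mem_insert, Finset.mem_singleton] at hx
            rcases hx with rfl | rfl
            · exact Or.inl (Or.inl rfl)
            · exact Or.inl (Or.inr rfl)
          · simp only [Matrix.cons_val_one, Matrix.head_cons, Matrix.cons_val_zero, Finset.mem_singleton] at hc
            subst hc
            right
            rw [← hy, ← hget]
            exact htake
      · -- second block: a part-0 singleton
        have hk : (j : ℕ) - l1.length < l2.length := by
          simp only [List.length_append] at hjl; omega
        have hget : (l1 ++ l2).get j = l2[(j : ℕ) - l1.length]'hk := by
          rw [List.get_eq_getElem, List.getElem_append_right hj]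
        obtain ⟨x, hx1, hx2, hx⟩ := (hmem2 _).1 (List.getElem_mem hk)
        refine ⟨![2,1], by decide, ![{1, x}, {1}], ?_, ?_, ?_⟩
        · intro i; fin_cases i
          · show {1, x} ⊆ Icc 1 (n 0) ∧ ({1, x} : Finset ℕ).card = 2
            constructor
            · intro a ha
              simp only [Finset.mem_insert, Finset.mem_singleton] at ha
              rw [Finset.mem_Icc]
              rcases ha with rfl | rfl <;> omega
            · rw [Finset.card_insert_of_notMem (by rw [Finset.mem_singleton]; omega),
                Finset.card_singleton]
          · show {1} ⊆ Icc 1 (n 1) ∧ ({1} : Finset ℕ).card = 1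
            refine ⟨?_, Finset.card_singleton 1⟩
            rw [Finset.singleton_subset_iff, Finset.mem_Icc]
            omega
        · rw [mem_copy]
          refine Or.inl ⟨x, by simp, by rw [hget, hx]⟩
        · intro W hW
          rw [mem_copy] at hW
          rcases hW with ⟨a, ha, rfl⟩ | ⟨c, hc, rfl⟩
          · simp only [Matrix.cons_val_zero, Finset.mem_insert, Finset.mem_singleton] at ha
            rcases ha with rfl | rfl
            · exact Or.inl (Or.inl rfl)
            · right
              rw [← hx, ← hget]
              exact htake
          · simp only [Matrix.cons_val_one, Matrix.head_cons, Matrix.cons_val_zero, Finset.mem_singleton] at hc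
            subst hc
            right
            show _ ∈ (l1 ++ l2).take ((j : ℕ) + 1)
            rw [List.take_append, List.take_of_length_le (by omega),
              List.mem_append]
            left
            rw [hmem1]
            exact ⟨1, le_refl 1, by omega, rfl⟩

lemma tensor_finite (n : Fin 2 → ℕ) : (tensorEdges 2 {![1,0],![0,1]} n).Finite := by
  apply Set.Finite.subset (Finset.finite_toSet
    (((Icc 1 (n 0)).image fun x => ({((0:Fin 2), x)} : Finset (Fin 2 × ℕ))) ∪
     ((Icc 1 (n 1)).image fun y => ({((1:Fin 2), y)} : Finset (Fin 2 × ℕ)))))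
  intro W hW
  rw [mem_tensor] at hW
  simp only [Finset.coe_union, Set.mem_union, Finset.coe_image, Set.mem_image,
    Finset.mem_coe]
  rcases hW with ⟨x, hx, rfl⟩ | ⟨y, hy, rfl⟩
  · exact Or.inl ⟨x, hx, rfl⟩
  · exact Or.inr ⟨y, hy, rfl⟩

lemma lower (n : Fin 2 → ℕ) (h1 : 2 ≤ n 0) (h2 : 2 ≤ n 1)
    (F : Set (Finset (Fin 2 × ℕ))) (h : CWeaklySat 2 {![1,0],![0,1]} {![2,1],![1,2]} n F) :
    2 ≤ F.ncard := by
  classical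
  obtain ⟨hFsub, l, hnd, hset, hcond⟩ := h
  have hfin : F.Finite := (tensor_finite n).subset hFsub
  rw [← Nat.lt_iff_add_one_le]
  by_contra hcard'
  push_neg at hcard'
  have hcard : ∀ x, 1 < F.ncard → x := fun x hx => absurd hx (by omega)
  -- some singleton of part 1 is missing from F
  have hmiss : ∃ g, g ∈ tensorEdges 2 {![1,0],![0,1]} n ∧ g ∉ F := by
    by_cases hA : ({((1:Fin 2), 1)} : Finset (Fin 2 × ℕ)) ∈ F
    · by_cases hB : ({((1:Fin 2), 2)} : Finset (Fin 2 × ℕ)) ∈ F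
      · exact hcard _ ((Set.one_lt_ncard hfin).2
          ⟨_, hA, _, hB, by rw [Ne, sgl_inj]; omega⟩)
      · exact ⟨_, (mem_tensor n _).2 (Or.inr ⟨2, Finset.mem_Icc.2 ⟨by omega, h2⟩, rfl⟩), hB⟩
    · exact ⟨_, (mem_tensor n _).2 (Or.inr ⟨1, Finset.mem_Icc.2 ⟨le_refl 1, by omega⟩, rfl⟩), hA⟩
  obtain ⟨g, hgT, hgF⟩ := hmiss
  have hgl : g ∈ l := by
    have : g ∈ {e | e ∈ l} := by rw [hset]; exact ⟨hgT, hgF⟩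
    exact this
  obtain ⟨a, t, rfl⟩ : ∃ a t, l = a :: t := by
    cases l with
    | nil => simp at hgl
    | cons a t => exact ⟨a, t, rfl⟩
  obtain ⟨r, hr, R_, hR, hmem, hsub⟩ := hcond ⟨0, by simp⟩
  have hsub' : copyEdges 2 {![1,0],![0,1]} R_ ⊆ F ∪ {a} := by
    intro W hW
    rcases hsub hW with hWF | hWt
    · exact Or.inl hWF
    · simp only [List.take_succ_cons, List.take_zero, List.mem_singleton,
        Set.mem_setOf_eq] at hWt
      exact Or.inr hWt
  have key : ∀ e1 e2 e3 : Finset (Fin 2 × ℕ), e1 ≠ e2 → e1 ≠ e3 → e2 ≠ e3 →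
      e1 ∈ F ∪ {a} → e2 ∈ F ∪ {a} → e3 ∈ F ∪ {a} → False := by
    rintro e1 e2 e3 h12 h13 h23 (hm1 | hm1) (hm2 | hm2) (hm3 | hm3)
    · exact hcard _ ((Set.one_lt_ncard hfin).2 ⟨_, hm1, _, hm2, h12⟩)
    · exact hcard _ ((Set.one_lt_ncard hfin).2 ⟨_, hm1, _, hm2, h12⟩)
    · exact hcard _ ((Set.one_lt_ncard hfin).2 ⟨_, hm1, _, hm3, h13⟩)
    · exact h23 (hm2.trans hm3.symm)
    · exact hcard _ ((Set.one_lt_ncard hfin).2 ⟨_, hm2, _, hm3, h23⟩)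
    · exact h13 (hm1.trans hm3.symm)
    · exact h12 (hm1.trans hm2.symm)
    · exact h12 (hm1.trans hm2.symm)
  rcases Finset.mem_insert.1 hr with rfl | hr
  · -- r = ![2,1]
    obtain ⟨u, v, huv, huv2⟩ := Finset.card_eq_two.1 ((hR 0).2)
    obtain ⟨c, hc⟩ := Finset.card_eq_one.1 ((hR 1).2)
    refine key {((0:Fin 2), u)} {((0:Fin 2), v)} {((1:Fin 2), c)}
      (by rw [Ne, sgl_inj]; exact fun hh => huv hh.2)
      (by rw [Ne, sgl_inj]; exact fun hh => absurd hh.1 (by decide))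
      (by rw [Ne, sgl_inj]; exact fun hh => absurd hh.1 (by decide))
      (hsub' ((mem_copy _ _).2 (Or.inl ⟨u, by rw [huv2]; simp, rfl⟩)))
      (hsub' ((mem_copy _ _).2 (Or.inl ⟨v, by rw [huv2]; simp, rfl⟩)))
      (hsub' ((mem_copy _ _).2 (Or.inr ⟨c, by rw [hc]; simp, rfl⟩)))
  · -- r = ![1,2]
    rcases Finset.mem_singleton.1 hr with rfl
    obtain ⟨u, v, huv, huv2⟩ := Finset.card_eq_two.1 ((hR 1).2)
    obtain ⟨c, hc⟩ := Finset.card_eq_one.1 ((hR 0).2)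
    refine key {((1:Fin 2), u)} {((1:Fin 2), v)} {((0:Fin 2), c)}
      (by rw [Ne, sgl_inj]; exact fun hh => huv hh.2)
      (by rw [Ne, sgl_inj]; exact fun hh => absurd hh.1 (by decide))
      (by rw [Ne, sgl_inj]; exact fun hh => absurd hh.1 (by decide))
      (hsub' ((mem_copy _ _).2 (Or.inr ⟨u, by rw [huv2]; simp, rfl⟩)))
      (hsub' ((mem_copy _ _).2 (Or.inr ⟨v, by rw [huv2]; simp, rfl⟩)))
      (hsub' ((mem_copy _ _).2 (Or.inl ⟨c, by rw [hc]; simp, rfl⟩)))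

/-- For d = 2, S = {(1,0),(0,1)}, R = {(2,1),(1,2)} and n₁, n₂ ≥ 2:
c-wsat(⊗_S(n), ⊗_S(R)) = 2, while q(n,S,R) = (n₁−1)+(n₂−1)+1, so the general lower
bound n₁ + n₂ − q(n,S,R) = 1 is not tight. -/
theorem cwsat_not_tight_example (n : Fin 2 → ℕ) (h1 : 2 ≤ n 0) (h2 : 2 ≤ n 1) :
    cwsat 2 {![1, 0], ![0, 1]} {![2, 1], ![1, 2]} n = 2 ∧
    qval 2 n {![1, 0], ![0, 1]} {![2, 1], ![1, 2]}
      = ((n 0 : ℤ) - 1) + ((n 1 : ℤ) - 1) + 1 ∧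
    (n 0 : ℤ) + (n 1 : ℤ) - qval 2 n {![1, 0], ![0, 1]} {![2, 1], ![1, 2]} = 1 := by
  have hm : 2 ∈ {k : ℕ | ∃ F : Set (Finset (Fin 2 × ℕ)),
      CWeaklySat 2 {![1, 0], ![0, 1]} {![2, 1], ![1, 2]} n F ∧ F.ncard = 2} :=
    ⟨F0, upper n h1 h2, Set.ncard_pair (by rw [Ne, sgl_inj]; omega)⟩
  have hcw : cwsat 2 {![1, 0], ![0, 1]} {![2, 1], ![1, 2]} n = 2 := by
    apply le_antisymm
    · exact Nat.sInf_le hm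
    · refine le_csInf ⟨2, hm⟩ ?_
      rintro k ⟨F, hws, rfl⟩
      exact lower n h1 h2 F hws
  have hq : qval 2 n {![1, 0], ![0, 1]} {![2, 1], ![1, 2]}
      = ((n 0 : ℤ) - 1) + ((n 1 : ℤ) - 1) + 1 := by
    have hd : downclFinset 2 {![1,0],![0,1]} = {![0,0],![1,0],![0,1]} := by decide
    have hp : ({![2,1],![1,2]} : Finset (Fin 2 → ℕ)).powerset.filter (fun Q => Q ≠ ∅)
      = {{![2,1]},{![1,2]},{![2,1],![1,2]}} := by decide
    rw [qval, hd, hp]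
    repeat rw [Finset.sum_insert (by decide)]
    repeat rw [Finset.sum_singleton]
    have e1 : Finset.univ.filter (fun i => ![0,0] i ≠ 0) = (∅ : Finset (Fin 2)) := by decide
    have e2 : Finset.univ.filter (fun i => ![1,0] i ≠ 0) = ({0} : Finset (Fin 2)) := by decide
    have e3 : Finset.univ.filter (fun i => ![0,1] i ≠ 0) = ({1} : Finset (Fin 2)) := by decide
    rw [e1, e2, e3]
    repeat rw [Finset.prod_singleton]
    simp only [Finset.prod_empty]
    have hc : ({![2,1],![1,2]} : Finset (Fin 2 → ℕ)).card = 2 := by decide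
    have s1 : ({![2,1],![1,2]} : Finset (Fin 2 → ℕ)).sup (fun r => r 0) = 2 := by decide
    have s2 : ({![2,1],![1,2]} : Finset (Fin 2 → ℕ)).sup (fun r => r 1) = 2 := by decide
    have s3 : ({![2,1]} : Finset (Fin 2 → ℕ)).sup (fun r => r 0) = 2 := by decide
    have s4 : ({![2,1]} : Finset (Fin 2 → ℕ)).sup (fun r => r 1) = 1 := by decide
    have s5 : ({![1,2]} : Finset (Fin 2 → ℕ)).sup (fun r => r 0) = 1 := by decide
    have s6 : ({![1,2]} : Finset (Fin 2 → ℕ)).sup (fun r => r 1) = 2 := by decide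
    repeat rw [Finset.sum_insert (by decide)]
    repeat rw [Finset.sum_singleton]
    repeat rw [Finset.prod_singleton]
    simp only [Finset.prod_empty, hc, s1, s2, s3, s4, s5, s6, Finset.card_singleton,
      Matrix.cons_val_zero, Matrix.cons_val_one, Matrix.head_cons]
    norm_num [Nat.choose_one_right]
    generalize n 0 = a at *
    generalize n 1 = b at *
    clear hd hp e1 e2 e3 hc s1 s2 s3 s4 s5 s6
    omega
  refine ⟨hcw, hq, ?_⟩
  rw [hq]
  ring
end
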